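/- arXiv:1908.00663 — 2 statements merged into one kernel-verified Lean document; each statement's English description precedes it below -/
import Mathlib

section
/- (Proposition 4, First Stage Equivalence with Multiple Networks.) Let q ≥ 1, let M¹, …, M^q be n×n real matrices, η₀¹, …, η₀^q, X ∈ ℝⁿ and β ∈ ℝ. Assume I − Σ_{j=1}^q M^j ∘ η₀^j is invertible and X_k ≠ 0 whenever η₀^j_k ≠ 0 for some j. Let f := (I − Σ_{j=1}^q M^j ∘ η₀^j)⁻¹ (β·X) and define η̃^j ∈ ℝⁿ by η̃^j_k := η₀^j_k · f_k / X_k if η₀^j_k ≠ 0 and η̃^j_k := 0 otherwise. Then f = β·X + Σ_{j=1}^q (M^j ∘ X)·η̃^j, and for each j the support of η̃^j is contained in the support of η₀^j. -/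
/-! Since `(M ∘ v) w = M (v * w)` with `*` the pointwise product, both sides of the claimed
identity only see the products `η₀^j * f` and `X * η̃^j`, and these agree coordinatewise by the
choice of `η̃^j`; the identity is then the fixed-point form `f = β X + A f` of
`f = (1 - A)⁻¹ (β X)`, where `A = Σ_j M^j ∘ η₀^j`. -/

/-- For an n×n real matrix `M` and a vector `v`, `M ∘ v` is the matrix `M * diagonal v`. -/
noncomputable def circ {n : ℕ} (M : Matrix (Fin n) (Fin n) ℝ) (v : Fin n → ℝ) :
    Matrix (Fin n) (Fin n) ℝ :=
  M * Matrix.diagonal v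

open Matrix

theorem Matrix.nonsing_inv_one_sub_mulVec {ι R : Type*} [Fintype ι] [DecidableEq ι] [CommRing R]
    {A : Matrix ι ι R} (hA : IsUnit (1 - A)) (b : ι → R) :
    (1 - A)⁻¹ *ᵥ b = b + A *ᵥ ((1 - A)⁻¹ *ᵥ b) := by
  have hb : (1 - A) *ᵥ ((1 - A)⁻¹ *ᵥ b) = b := by
    rw [mulVec_mulVec, mul_nonsing_inv _ ((isUnit_iff_isUnit_det _).mp hA), one_mulVec]
  rwa [sub_mulVec, one_mulVec, sub_eq_iff_eq_add] at hb

theorem circ_mulVec {n : ℕ} (M : Matrix (Fin n) (Fin n) ℝ) (v w : Fin n → ℝ) :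
    circ M v *ᵥ w = M *ᵥ (v * w) := by
  rw [circ, ← mulVec_mulVec]
  congr 1
  funext k
  exact mulVec_diagonal v w k

theorem mul_ite_div_eq_mul {K : Type*} [Field K] [DecidableEq K] {a x : K} (b : K)
    (hx : a ≠ 0 → x ≠ 0) :
    x * (if a ≠ 0 then a * b / x else 0) = a * b := by
  split_ifs with ha
  · exact mul_div_cancel₀ _ (hx ha)
  · rw [not_not.mp ha, mul_zero, zero_mul]

theorem first_stage_equivalence_multiple_networks_general {n q : ℕ}
    (M : Fin q → Matrix (Fin n) (Fin n) ℝ)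
    (η₀ : Fin q → Fin n → ℝ) (X : Fin n → ℝ) (β : ℝ)
    (hinv : IsUnit (1 - ∑ j, circ (M j) (η₀ j)))
    (hX : ∀ k, (∃ j, η₀ j k ≠ 0) → X k ≠ 0)
    (f : Fin n → ℝ) (hf : f = (1 - ∑ j, circ (M j) (η₀ j))⁻¹.mulVec (β • X))
    (ηtil : Fin q → Fin n → ℝ)
    (hηtil : ∀ j k, ηtil j k = if η₀ j k ≠ 0 then η₀ j k * f k / X k else 0) :
    (f = β • X + ∑ j, (circ (M j) X).mulVec (ηtil j)) ∧
      ∀ j k, η₀ j k = 0 → ηtil j k = 0 := by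
  refine ⟨?_, fun j k h => by simp [hηtil, h]⟩
  have hrescale : ∀ j, X * ηtil j = η₀ j * f := fun j => funext fun k => by
    simpa only [Pi.mul_apply, hηtil] using mul_ite_div_eq_mul (f k) fun h => hX k ⟨j, h⟩
  calc f = β • X + (∑ j, circ (M j) (η₀ j)) *ᵥ f := by
        rw [hf]; exact Matrix.nonsing_inv_one_sub_mulVec hinv _
    _ = β • X + ∑ j, circ (M j) X *ᵥ ηtil j := by
        simp only [sum_mulVec, circ_mulVec, hrescale]

/-- (Proposition 4, First Stage Equivalence with Multiple Networks.)  Let `q ≥ 1`, let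
`M¹, …, M^q` be n×n real matrices, `η₀¹, …, η₀^q, X ∈ ℝⁿ`, `β ∈ ℝ`.  Assume
`I − Σ_j M^j ∘ η₀^j` is invertible and `X_k ≠ 0` whenever `η₀^j_k ≠ 0` for some `j`.
Let `f := (I − Σ_j M^j ∘ η₀^j)⁻¹ (β·X)` and define `ηtil^j_k := η₀^j_k · f_k / X_k` if
`η₀^j_k ≠ 0`, `ηtil^j_k := 0` otherwise.  Then `f = β·X + Σ_j (M^j ∘ X)·ηtil^j`, and for
each `j` the support of `ηtil^j` is contained in the support of `η₀^j`. -/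
theorem first_stage_equivalence_multiple_networks {n q : ℕ} (hq : 1 ≤ q)
    (M : Fin q → Matrix (Fin n) (Fin n) ℝ)
    (η₀ : Fin q → Fin n → ℝ) (X : Fin n → ℝ) (β : ℝ)
    (hinv : IsUnit (1 - ∑ j, circ (M j) (η₀ j)))
    (hX : ∀ k, (∃ j, η₀ j k ≠ 0) → X k ≠ 0)
    (f : Fin n → ℝ) (hf : f = (1 - ∑ j, circ (M j) (η₀ j))⁻¹.mulVec (β • X))
    (ηtil : Fin q → Fin n → ℝ)
    (hηtil : ∀ j k, ηtil j k = if η₀ j k ≠ 0 then η₀ j k * f k / X k else 0) :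
    (f = β • X + ∑ j, (circ (M j) X).mulVec (ηtil j)) ∧
      ∀ j k, η₀ j k = 0 → ηtil j k = 0 :=
  first_stage_equivalence_multiple_networks_general M η₀ X β hinv hX f hf ηtil hηtil
end

section
/- (Oracle inequality for the LASSO under the compatibility condition.) Let A be an n×p real matrix, η₀ ∈ ℝ^p with support S of cardinality s₀ ≥ 1, ε ∈ ℝⁿ, and Y := Aη₀ + ε. Suppose the compatibility condition holds with constant φ₀ > 0: for every δ ∈ ℝ^p with ‖δ_{S^c}‖₁ ≤ 3‖δ_S‖₁ one has ‖δ_S‖₁² ≤ s₀ · (δᵀ(AᵀA)δ / n) / φ₀². Let η̂ be a global minimizer of η ↦ (1/n)‖Y − Aη‖₂² + λ‖η‖₁, and suppose λ ≥ 4‖(1/n)Aᵀε‖_∞. Then (1/n)‖A(η̂ − η₀)‖₂² + λ‖η̂ − η₀‖₁ ≤ 4λ²s₀/φ₀². -/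
open Matrix

/-- The (normalized) LASSO objective with design matrix `A`, response `Y` and tuning
parameter `λ`: `η ↦ (1/n)‖Y − Aη‖₂² + λ‖η‖₁`. -/
noncomputable def lassoObjN {n p : ℕ} (A : Matrix (Fin n) (Fin p) ℝ) (Y : Fin n → ℝ)
    (lam : ℝ) (η : Fin p → ℝ) : ℝ :=
  (1 / (n : ℝ)) * (∑ i, (Y i - A.mulVec η i) ^ 2) + lam * ∑ j, |η j|

/-!
Write `δ = η̂ - η₀`, `Q = ‖Aδ‖₂²/n`, `T = ‖δ_S‖₁` and `U = ‖δ_{Sᶜ}‖₁`. Comparing the objective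
at `η̂` and at `η₀` gives the basic inequality `Q + λ‖η̂‖₁ ≤ (2/n) εᵀAδ + λ‖η₀‖₁`. The noise
term is at most `2‖Aᵀε/n‖_∞ ‖δ‖₁ ≤ λ(T + U)/2`, and since `η₀` vanishes off `S`,
`‖η₀‖₁ - ‖η̂‖₁ ≤ T - U`. Together: `2Q + λU ≤ 3λT`. For `λ > 0` this puts `δ` in the cone
`U ≤ 3T`, so the compatibility condition gives `T² ≤ κQ` with `κ = s₀/φ₀²`, and then
`2Q + λ(T + U) ≤ 4λT ≤ Q + 4λ²κ`.
-/

section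

variable {m ι : Type*} [Fintype m] [Fintype ι]

theorem dotProduct_transpose_mul_mulVec_self (A : Matrix m ι ℝ) (v : ι → ℝ) :
    v ⬝ᵥ (Aᵀ * A) *ᵥ v = ∑ i, (A *ᵥ v) i ^ 2 := by
  rw [← mulVec_mulVec, dotProduct_mulVec, vecMul_transpose]
  simp only [dotProduct, sq]

theorem sum_mul_le_iSup_abs_mul_sum_abs (g δ : ι → ℝ) :
    ∑ j, g j * δ j ≤ (⨆ j, |g j|) * ∑ j, |δ j| := by
  rw [Finset.mul_sum]
  refine Finset.sum_le_sum fun j _ => ?_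
  calc g j * δ j ≤ |g j| * |δ j| := by rw [← abs_mul]; exact le_abs_self _
    _ ≤ (⨆ j, |g j|) * |δ j| := by
      gcongr
      exact le_ciSup (f := fun j => |g j|) (Set.finite_range _).bddAbove j

theorem sum_abs_add_sum_compl_abs_sub_le [DecidableEq ι] (S : Finset ι) {η₀ : ι → ℝ}
    (hη₀ : ∀ j ∉ S, η₀ j = 0) (η : ι → ℝ) :
    ∑ j, |η₀ j| + ∑ j ∈ Sᶜ, |η j - η₀ j| ≤ ∑ j, |η j| + ∑ j ∈ S, |η j - η₀ j| := by
  have hcompl : ∀ j ∈ Sᶜ, |η₀ j| = 0 ∧ |η j - η₀ j| = |η j| := fun j hj => by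
    simp [hη₀ j (Finset.mem_compl.mp hj)]
  rw [← Finset.sum_add_sum_compl S, ← Finset.sum_add_sum_compl S (fun j => |η j|),
    Finset.sum_congr rfl fun j hj => (hcompl j hj).1,
    Finset.sum_congr rfl fun j hj => (hcompl j hj).2]
  have htri : ∑ j ∈ S, |η₀ j| ≤ ∑ j ∈ S, |η j| + ∑ j ∈ S, |η j - η₀ j| := by
    rw [← Finset.sum_add_distrib]
    refine Finset.sum_le_sum fun j _ => ?_
    linarith [abs_sub_abs_le_abs_sub (η₀ j) (η j), abs_sub_comm (η₀ j) (η j)]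
  simp only [Finset.sum_const_zero, add_zero]
  linarith

end

theorem lassoObjN_basic_inequality {n p : ℕ} (A : Matrix (Fin n) (Fin p) ℝ)
    (η₀ ηhat : Fin p → ℝ) (ε : Fin n → ℝ) (lam : ℝ)
    (hmin : lassoObjN A (A *ᵥ η₀ + ε) lam ηhat ≤ lassoObjN A (A *ᵥ η₀ + ε) lam η₀) :
    (1 / (n : ℝ)) * ∑ i, (A *ᵥ (ηhat - η₀)) i ^ 2 + lam * ∑ j, |ηhat j|
      ≤ 2 * ∑ j, (1 / (n : ℝ)) * (Aᵀ *ᵥ ε) j * (ηhat j - η₀ j) + lam * ∑ j, |η₀ j| := by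
  have hexpand : ∑ i, ((A *ᵥ η₀ + ε) i - (A *ᵥ ηhat) i) ^ 2
      = ∑ i, ε i ^ 2 - 2 * ∑ i, ε i * (A *ᵥ (ηhat - η₀)) i + ∑ i, (A *ᵥ (ηhat - η₀)) i ^ 2 := by
    rw [Finset.mul_sum, ← Finset.sum_sub_distrib, ← Finset.sum_add_distrib]
    refine Finset.sum_congr rfl fun i _ => ?_
    simp only [mulVec_sub, Pi.add_apply, Pi.sub_apply]
    ring
  have hnoise : ∑ i, ε i * (A *ᵥ (ηhat - η₀)) i = ∑ j, (Aᵀ *ᵥ ε) j * (ηhat j - η₀ j) := by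
    change ε ⬝ᵥ A *ᵥ (ηhat - η₀) = (Aᵀ *ᵥ ε) ⬝ᵥ (ηhat - η₀)
    rw [dotProduct_mulVec, mulVec_transpose]
  have hεonly : ∑ i, ((A *ᵥ η₀ + ε) i - (A *ᵥ η₀) i) ^ 2 = ∑ i, ε i ^ 2 := by simp
  unfold lassoObjN at hmin
  rw [hexpand, hεonly, hnoise] at hmin
  simp only [mul_assoc, ← Finset.mul_sum]
  linear_combination hmin

theorem add_mul_add_le_of_cone_of_compatibility {Q T U lam κ : ℝ} (hQ : 0 ≤ Q) (hκ : 0 ≤ κ)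
    (hlam : 0 ≤ lam) (hbasic : 2 * Q + lam * U ≤ 3 * lam * T)
    (hcompat : U ≤ 3 * T → T ^ 2 ≤ κ * Q) :
    Q + lam * (T + U) ≤ 4 * lam ^ 2 * κ := by
  rcases hlam.eq_or_lt with rfl | hlam
  · simp only [zero_mul, add_zero] at hbasic ⊢
    nlinarith
  have hcone : U ≤ 3 * T := by nlinarith
  have hT := hcompat hcone
  have hAMGM : 4 * lam * T ≤ Q + 4 * lam ^ 2 * κ := by
    refine le_of_sq_le_sq ?_ (by positivity)
    calc (4 * lam * T) ^ 2 = 16 * lam ^ 2 * T ^ 2 := by ring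
      _ ≤ 16 * lam ^ 2 * (κ * Q) := by gcongr
      _ ≤ (Q + 4 * lam ^ 2 * κ) ^ 2 := by nlinarith [sq_nonneg (Q - 4 * lam ^ 2 * κ)]
  linarith

theorem lasso_oracle_inequality_general {n p : ℕ} (A : Matrix (Fin n) (Fin p) ℝ)
    (η₀ : Fin p → ℝ) (ε : Fin n → ℝ) (Y : Fin n → ℝ) (hY : Y = A.mulVec η₀ + ε)
    (S : Finset (Fin p)) (hS : ∀ j, j ∈ S ↔ η₀ j ≠ 0)
    (φ₀ : ℝ)
    (hcompat : ∀ δ : Fin p → ℝ,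
      (∑ j ∈ Sᶜ, |δ j|) ≤ 3 * ∑ j ∈ S, |δ j| →
        (∑ j ∈ S, |δ j|) ^ 2 ≤ (S.card : ℝ) * (δ ⬝ᵥ (Aᵀ * A).mulVec δ / n) / φ₀ ^ 2)
    (lam : ℝ) (ηhat : Fin p → ℝ)
    (hmin : ∀ η : Fin p → ℝ, lassoObjN A Y lam ηhat ≤ lassoObjN A Y lam η)
    (hlam : 4 * (⨆ j, |(1 / (n : ℝ)) * Aᵀ.mulVec ε j|) ≤ lam) :
    (1 / (n : ℝ)) * (∑ i, (A.mulVec (ηhat - η₀) i) ^ 2) + lam * ∑ j, |ηhat j - η₀ j|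
      ≤ 4 * lam ^ 2 * S.card / φ₀ ^ 2 := by
  subst hY
  have hη₀ : ∀ j ∉ S, η₀ j = 0 := fun j hj => not_not.mp (mt (hS j).2 hj)
  have hM : 0 ≤ ⨆ j, |(1 / (n : ℝ)) * Aᵀ.mulVec ε j| := Real.iSup_nonneg fun j => abs_nonneg _
  have hlam0 : 0 ≤ lam := by linarith
  have hnoise : ∑ j, (1 / (n : ℝ)) * (Aᵀ *ᵥ ε) j * (ηhat j - η₀ j)
      ≤ lam / 4 * ∑ j, |ηhat j - η₀ j| :=
    (sum_mul_le_iSup_abs_mul_sum_abs _ (ηhat - η₀)).trans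
      (mul_le_mul_of_nonneg_right (by linarith) (by positivity))
  have hbasic := lassoObjN_basic_inequality A η₀ ηhat ε lam (hmin η₀)
  have hsupport := mul_le_mul_of_nonneg_left (sum_abs_add_sum_compl_abs_sub_le S hη₀ ηhat) hlam0
  rw [← Finset.sum_add_sum_compl S (fun j => |ηhat j - η₀ j|)] at hnoise ⊢
  rw [mul_div_assoc]
  refine add_mul_add_le_of_cone_of_compatibility (by positivity) (by positivity) hlam0
    (by linarith) fun hcone => ?_
  have hcompat_δ := hcompat (ηhat - η₀) hcone
  rw [dotProduct_transpose_mul_mulVec_self] at hcompat_δ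
  exact hcompat_δ.trans_eq (by ring)

/-- (Oracle inequality for the LASSO under the compatibility condition.)  Let `Y := Aη₀ + ε`
with `η₀` supported on `S` of cardinality `s₀ ≥ 1`.  Suppose the compatibility condition
holds with constant `φ₀ > 0`: for every `δ` with `‖δ_{S^c}‖₁ ≤ 3‖δ_S‖₁` one has
`‖δ_S‖₁² ≤ s₀ · (δᵀ(AᵀA)δ / n) / φ₀²`.  Let `η̂` be a global minimizer of
`η ↦ (1/n)‖Y − Aη‖₂² + λ‖η‖₁`, and suppose `λ ≥ 4‖(1/n)Aᵀε‖_∞`.  Then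
`(1/n)‖A(η̂ − η₀)‖₂² + λ‖η̂ − η₀‖₁ ≤ 4λ²s₀/φ₀²`. -/
theorem lasso_oracle_inequality {n p : ℕ} (A : Matrix (Fin n) (Fin p) ℝ)
    (η₀ : Fin p → ℝ) (ε : Fin n → ℝ) (Y : Fin n → ℝ) (hY : Y = A.mulVec η₀ + ε)
    (S : Finset (Fin p)) (hS : ∀ j, j ∈ S ↔ η₀ j ≠ 0) (hcard : 1 ≤ S.card)
    (φ₀ : ℝ) (hφ₀ : 0 < φ₀)
    (hcompat : ∀ δ : Fin p → ℝ,
      (∑ j ∈ Sᶜ, |δ j|) ≤ 3 * ∑ j ∈ S, |δ j| →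
        (∑ j ∈ S, |δ j|) ^ 2 ≤ (S.card : ℝ) * (δ ⬝ᵥ (Aᵀ * A).mulVec δ / n) / φ₀ ^ 2)
    (lam : ℝ) (ηhat : Fin p → ℝ)
    (hmin : ∀ η : Fin p → ℝ, lassoObjN A Y lam ηhat ≤ lassoObjN A Y lam η)
    (hlam : 4 * (⨆ j, |(1 / (n : ℝ)) * Aᵀ.mulVec ε j|) ≤ lam) :
    (1 / (n : ℝ)) * (∑ i, (A.mulVec (ηhat - η₀) i) ^ 2) + lam * ∑ j, |ηhat j - η₀ j|
      ≤ 4 * lam ^ 2 * S.card / φ₀ ^ 2 :=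
  lasso_oracle_inequality_general A η₀ ε Y hY S hS φ₀ hcompat lam ηhat hmin hlam
end
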